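/- If a graph G contains an X-spider of order k with body v, then in the line graph of the graph G' obtained from G by consolidating X to a single vertex x, there exist k pairwise vertex-disjoint paths from the clique δ(x) to the set of edges incident to v. -/

import Mathlib

/-- A finite multigraph without loops: a vertex type, an edge type, and an
endpoint map assigning to each edge an unordered pair of distinct vertices. -/
structure Multigraph where
  V : Type
  E : Type
  [finV : Finite V]
  [finE : Finite E]
  ends : E → Sym2 V
  no_loops : ∀ e, ¬ (ends e).IsDiag

attribute [instance] Multigraph.finV Multigraph.finE

namespace Multigraph

variable (G : Multigraph)

/-- The set of edges with exactly one endpoint in `X`. -/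
def edgeBoundary (X : Set G.V) : Set G.E :=
  {e | ∃ u v, G.ends e = s(u, v) ∧ u ∈ X ∧ v ∉ X}

/-- The degree of a vertex: the number of edges incident with it. -/
noncomputable def degree (v : G.V) : ℕ := {e | v ∈ G.ends e}.ncard

/-- Two vertices are adjacent if some edge joins them. -/
def Adj (u v : G.V) : Prop := ∃ e, G.ends e = s(u, v)

/-- Walks in a multigraph. -/
inductive Walk : G.V → G.V → Type
  | nil (v : G.V) : Walk v v
  | cons {u v w : G.V} (e : G.E) (h : G.ends e = s(u, v)) (p : Walk v w) : Walk u w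

variable {G}

/-- The list of edges of a walk. -/
def Walk.edges : ∀ {u v : G.V}, G.Walk u v → List G.E
  | _, _, .nil _ => []
  | _, _, .cons e _ p => e :: p.edges

/-- The list of vertices of a walk, from the first to the last. -/
def Walk.support : ∀ {u v : G.V}, G.Walk u v → List G.V
  | _, v, .nil _ => [v]
  | u, _, .cons _ _ p => u :: p.support

/-- A walk is a path if it repeats no vertex. -/
def Walk.IsPath {u v : G.V} (p : G.Walk u v) : Prop := p.support.Nodup

/-- The internal vertices of a walk (all vertices except the two endpoints). -/
def Walk.internals {u v : G.V} (p : G.Walk u v) : List G.V := p.support.tail.dropLast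

/-- The walk avoids the edge set `F`. -/
def Walk.avoids {u v : G.V} (p : G.Walk u v) (F : Set G.E) : Prop := ∀ e ∈ p.edges, e ∉ F

variable (G)

/-- Any two vertices can be joined by a walk avoiding the edge set `F`. -/
def ConnectedAvoiding (F : Set G.E) : Prop :=
  ∀ u v : G.V, ∃ p : G.Walk u v, p.avoids F

/-- A multigraph is connected if any two vertices are joined by a walk. -/
def Connected : Prop := G.ConnectedAvoiding ∅

/-- A multigraph is `k`-edge-connected if it has at least two vertices and
deleting any fewer than `k` edges leaves it connected. -/
def EdgeConnected (k : ℕ) : Prop :=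
  Nontrivial G.V ∧ ∀ F : Set G.E, F.ncard < k → G.ConnectedAvoiding F

end Multigraph

open Multigraph

/-- The data of a (weak) immersion of `H` in `G`: an injection of the vertices and
pairwise edge-disjoint composite paths, one for each edge of `H`. -/
structure ImmersionData (H G : Multigraph) where
  π : H.V → G.V
  inj : Function.Injective π
  pathEnds : H.E → G.V × G.V
  path : ∀ f : H.E, G.Walk (pathEnds f).1 (pathEnds f).2
  ends_eq : ∀ f : H.E, Sym2.map π (H.ends f) = s((pathEnds f).1, (pathEnds f).2)
  isPath : ∀ f, (path f).IsPath
  edge_disj : ∀ f f', f ≠ f' → ∀ e, e ∈ (path f).edges → e ∉ (path f').edges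

/-- `G` contains `H` as a (weak) immersion. -/
def Immersion (H G : Multigraph) : Prop := Nonempty (ImmersionData H G)

/-- An immersion is strong if no branch vertex is an internal vertex of a composite path. -/
def ImmersionData.Strong {H G : Multigraph} (I : ImmersionData H G) : Prop :=
  ∀ f : H.E, ∀ v : H.V, I.π v ∉ (I.path f).internals

/-- `G` contains `H` as a strong immersion. -/
def StrongImmersion (H G : Multigraph) : Prop := ∃ I : ImmersionData H G, I.Strong

/-- `G` contains `H` as a topological minor: an immersion whose composite paths are
internally vertex-disjoint and avoid the branch vertices internally. -/
def TopologicalMinor (H G : Multigraph) : Prop :=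
  ∃ I : ImmersionData H G,
    (∀ f v, I.π v ∉ (I.path f).internals) ∧
    (∀ f f', f ≠ f' → ∀ w, w ∈ (I.path f).internals → w ∉ (I.path f').internals)

/-- The complete multigraph `K t`: one edge for every unordered pair of distinct vertices. -/
def cliqueGraph (t : ℕ) : Multigraph where
  V := Fin t
  E := {p : Sym2 (Fin t) // ¬ p.IsDiag}
  ends := Subtype.val
  no_loops := fun e => e.2

/-- The multigraph `S_{k,n}`: vertices `x_1, …, x_n` (`some i`) and `y` (`none`), with
exactly `k` parallel edges between each `x_i` and `y`. -/
def starMulti (k n : ℕ) : Multigraph where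
  V := Option (Fin n)
  E := Fin n × Fin k
  ends := fun p => s(some p.1, none)
  no_loops := fun e h => by simp [Sym2.mk_isDiag_iff] at h

/-- The multigraph `P_{k,n}`: a path on `n` vertices with each edge replaced by `k`
parallel edges. -/
def pathMulti (k n : ℕ) : Multigraph where
  V := Fin n
  E := Fin (n - 1) × Fin k
  ends := fun p => s(⟨p.1.1, by have := p.1.2; omega⟩, ⟨p.1.1 + 1, by have := p.1.2; omega⟩)
  no_loops := fun e h => by simp [Sym2.mk_isDiag_iff, Fin.ext_iff] at h

namespace Multigraph

/-- A subgraph of a multigraph, given by a set of vertices and a set of edges with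
both endpoints among those vertices. -/
structure Sub (G : Multigraph) where
  verts : Set G.V
  edgeSet : Set G.E
  closed : ∀ e ∈ edgeSet, ∀ v ∈ G.ends e, v ∈ verts

/-- `(A, B)` is a separation: `A` and `B` are edge-disjoint subgraphs whose union is `G`. -/
def IsSeparation {G : Multigraph} (A B : G.Sub) : Prop :=
  A.verts ∪ B.verts = Set.univ ∧ A.edgeSet ∪ B.edgeSet = Set.univ ∧ A.edgeSet ∩ B.edgeSet = ∅

/-- The order of a separation `(A, B)`. -/
noncomputable def sepOrder {G : Multigraph} (A B : G.Sub) : ℕ := (A.verts ∩ B.verts).ncard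

/-- `𝒯` is a tangle of order `Θ` in `G`. -/
def IsTangle (G : Multigraph) (𝒯 : Set (G.Sub × G.Sub)) (Θ : ℕ) : Prop :=
  (∀ p ∈ 𝒯, IsSeparation p.1 p.2 ∧ sepOrder p.1 p.2 < Θ) ∧
  (∀ A B : G.Sub, IsSeparation A B → sepOrder A B < Θ → (A, B) ∈ 𝒯 ∨ (B, A) ∈ 𝒯) ∧
  (∀ p₁ ∈ 𝒯, ∀ p₂ ∈ 𝒯, ∀ p₃ ∈ 𝒯,
    ¬ (p₁.1.verts ∪ p₂.1.verts ∪ p₃.1.verts = Set.univ ∧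
       p₁.1.edgeSet ∪ p₂.1.edgeSet ∪ p₃.1.edgeSet = Set.univ)) ∧
  (∀ p ∈ 𝒯, p.1.verts ≠ Set.univ)

/-- The line graph of a multigraph: vertices are the edges of `G`, with an edge of the
line graph for each unordered pair of distinct edges of `G` sharing an endpoint. -/
def lineGraph (G : Multigraph) : Multigraph where
  V := G.E
  E := {p : Sym2 G.E // ¬ p.IsDiag ∧ ∃ e f, p = s(e, f) ∧ ∃ v, v ∈ G.ends e ∧ v ∈ G.ends f}
  ends := Subtype.val
  no_loops := fun e => e.2.1

/-- `G'` (with projection `q` and new vertex `x`) is obtained from `G` by consolidating the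
vertex set `X`: delete all edges with both ends in `X` and identify `X` to the vertex `x`. -/
def IsConsolidation (G : Multigraph) (X : Set G.V) (G' : Multigraph)
    (q : G.V → G'.V) (x : G'.V) : Prop :=
  Function.Surjective q ∧ (∀ a ∈ X, q a = x) ∧ (∀ a ∉ X, q a ≠ x) ∧
  (∀ a b, a ∉ X → b ∉ X → q a = q b → a = b) ∧
  ∃ φ : {e : G.E // ∃ w ∈ G.ends e, w ∉ X} ≃ G'.E,
    ∀ e, G'.ends (φ e) = Sym2.map q (G.ends e.1)

/-- An `X`-spider of order `k` with body `v`: `k` pairwise edge-disjoint paths from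
`v ∉ X` to `X`, none of them having an internal vertex in `X`. -/
def HasSpiderWithBody (G : Multigraph) (X : Set G.V) (k : ℕ) (v : G.V) : Prop :=
  v ∉ X ∧ ∃ (tgt : Fin k → G.V) (P : ∀ i, G.Walk v (tgt i)),
    (∀ i, tgt i ∈ X) ∧ (∀ i, (P i).IsPath) ∧
    (∀ i, ∀ w ∈ (P i).internals, w ∉ X) ∧
    (∀ i j, i ≠ j → ∀ e ∈ (P i).edges, e ∉ (P j).edges)

/-- `G` contains an `X`-spider of order `k`. -/
def HasXSpider (G : Multigraph) (X : Set G.V) (k : ℕ) : Prop :=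
  ∃ v, HasSpiderWithBody G X k v

/-- A model of the complete graph `K t` in `G`: `t` pairwise disjoint nonempty connected
branch sets with an edge of `G` between any two of them. -/
def IsCliqueModel (G : Multigraph) (t : ℕ) (X : Fin t → Set G.V) : Prop :=
  (∀ i, (X i).Nonempty) ∧
  (∀ i j, i ≠ j → Disjoint (X i) (X j)) ∧
  (∀ i, ∀ u ∈ X i, ∀ v ∈ X i, ∃ p : G.Walk u v, ∀ w ∈ p.support, w ∈ X i) ∧
  (∀ i j, i ≠ j → ∃ e, ∃ a ∈ X i, ∃ b ∈ X j, G.ends e = s(a, b))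

/-- The canonical separation `(A, B)` of the line graph of `G` associated to a vertex
set `U ⊆ V(G)`. -/
def IsCanonicalSeparation (G : Multigraph) (U : Set G.V) (A B : G.lineGraph.Sub) : Prop :=
  A.verts = {e : G.E | ∃ w ∈ G.ends e, w ∈ U} ∧
  A.edgeSet = {p : G.lineGraph.E | ∀ q ∈ G.lineGraph.ends p, ∃ w ∈ G.ends q, w ∈ U} ∧
  B.verts = {e : G.E | ∃ w ∈ G.ends e, w ∉ U} ∧
  B.edgeSet = {p : G.lineGraph.E | (∀ q ∈ G.lineGraph.ends p, ∃ w ∈ G.ends q, w ∉ U) ∧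
    ¬ (∀ q ∈ G.lineGraph.ends p, q ∈ G.edgeBoundary U)}

/-- A `k`-star with center `u`: a set of `k` edges all incident with `u`. -/
def IsKStarWithCenter (G : Multigraph) (F : Set G.E) (k : ℕ) (u : G.V) : Prop :=
  F.ncard = k ∧ ∀ e ∈ F, u ∈ G.ends e

/-- A set `F` of vertices of the line graph of `G` is free with respect to a tangle `𝒯`
in the line graph if no separation in `𝒯` of order less than `|F|` has `F` on its small side. -/
def FreeInTangle (G : Multigraph) (𝒯 : Set (G.lineGraph.Sub × G.lineGraph.Sub))
    (F : Set G.E) : Prop :=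
  ¬ ∃ p ∈ 𝒯, sepOrder p.1 p.2 < F.ncard ∧ F ⊆ p.1.verts

end Multigraph

/-!
Read a leg of the spider as its sequence of edges: consecutive edges share a vertex, so the
sequence is a walk in the line graph. Every edge of a leg has an endpoint outside `X` (the body
or an internal vertex), so it survives the consolidation, and the survivors correspond
injectively to edges of `G'`. Hence each leg becomes a path in `L(G')` from `δ(x)` to the edges
at `q v`, and the paths of different legs are vertex-disjoint because the legs are edge-disjoint.
-/

namespace Multigraph

variable {G : Multigraph}

def Walk.concat : ∀ {u v w : G.V}, G.Walk u v → ∀ e : G.E, G.ends e = s(v, w) → G.Walk u w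
  | _, _, w, .nil _, e, h => .cons e h (.nil w)
  | _, _, _, .cons e' h' p, e, h => .cons e' h' (p.concat e h)

theorem Walk.support_concat : ∀ {u v w : G.V} (p : G.Walk u v) (e : G.E)
    (h : G.ends e = s(v, w)), (p.concat e h).support = p.support ++ [w]
  | _, _, _, .nil _, _, _ => rfl
  | _, _, _, .cons _ _ p, e, h => by
      simp only [Walk.concat, Walk.support, p.support_concat e h, List.cons_append]

theorem Walk.support_ne_nil : ∀ {u v : G.V} (p : G.Walk u v), p.support ≠ []
  | _, _, .nil _ => List.cons_ne_nil _ _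
  | _, _, .cons _ _ _ => List.cons_ne_nil _ _

theorem Walk.start_mem_support : ∀ {u v : G.V} (p : G.Walk u v), u ∈ p.support
  | _, _, .nil _ => List.mem_singleton_self _
  | _, _, .cons _ _ _ => List.mem_cons_self

theorem Walk.end_mem_support : ∀ {u v : G.V} (p : G.Walk u v), v ∈ p.support
  | _, _, .nil _ => List.mem_singleton_self _
  | _, _, .cons _ _ p => List.mem_cons_of_mem _ p.end_mem_support

theorem Walk.edges_ne_nil_of_ne {u v : G.V} (p : G.Walk u v) (huv : u ≠ v) : p.edges ≠ [] := by
  cases p with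
  | nil => exact absurd rfl huv
  | cons => exact List.cons_ne_nil _ _

theorem Walk.mem_support_of_mem_ends : ∀ {u v : G.V} (p : G.Walk u v) {e : G.E} {z : G.V},
    e ∈ p.edges → z ∈ G.ends e → z ∈ p.support
  | _, _, .nil _, _, _, he, _ => absurd he List.not_mem_nil
  | _, _, .cons e' h p, e, z, he, hz => by
      rcases List.mem_cons.1 he with rfl | he
      · rw [h] at hz
        rcases Sym2.mem_iff.1 hz with rfl | rfl
        · exact List.mem_cons_self
        · exact List.mem_cons_of_mem _ p.start_mem_support
      · exact List.mem_cons_of_mem _ (p.mem_support_of_mem_ends he hz)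

theorem Walk.IsPath.edges_nodup : ∀ {u v : G.V} {p : G.Walk u v}, p.IsPath → p.edges.Nodup
  | _, _, .nil _, _ => List.nodup_nil
  | u, _, .cons e h p, hp => by
      rw [Walk.IsPath, Walk.support, List.nodup_cons] at hp
      refine List.nodup_cons.2 ⟨fun he => hp.1 ?_, Walk.IsPath.edges_nodup hp.2⟩
      exact p.mem_support_of_mem_ends he (by rw [h]; exact Sym2.mem_mk_left _ _)

theorem Walk.exists_mem_ends_mem_support_dropLast :
    ∀ {u v : G.V} (p : G.Walk u v) {e : G.E}, e ∈ p.edges → ∃ z ∈ G.ends e, z ∈ p.support.dropLast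
  | _, _, .nil _, _, he => absurd he List.not_mem_nil
  | u, _, .cons e' h p, e, he => by
      rw [Walk.support, List.dropLast_cons_of_ne_nil p.support_ne_nil]
      rcases List.mem_cons.1 he with rfl | he
      · exact ⟨u, by rw [h]; exact Sym2.mem_mk_left _ _, List.mem_cons_self⟩
      · obtain ⟨z, hz, hzp⟩ := p.exists_mem_ends_mem_support_dropLast he
        exact ⟨z, hz, List.mem_cons_of_mem _ hzp⟩

theorem Walk.eq_or_mem_internals_of_mem_support_dropLast {u v z : G.V} (p : G.Walk u v)
    (hz : z ∈ p.support.dropLast) : z = u ∨ z ∈ p.internals := by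
  cases p with
  | nil => simp [Walk.support] at hz
  | cons _ _ p =>
    rw [Walk.support, List.dropLast_cons_of_ne_nil p.support_ne_nil] at hz
    exact List.mem_cons.1 hz

theorem lineGraph_adj {a b : G.E} {z : G.V} (hab : a ≠ b) (ha : z ∈ G.ends a)
    (hb : z ∈ G.ends b) : G.lineGraph.Adj a b :=
  ⟨⟨s(a, b), fun hd => hab (Sym2.mk_isDiag_iff.1 hd), a, b, rfl, z, ha, hb⟩, rfl⟩

theorem Walk.exists_lineGraph_walk {H H' : Multigraph} (f : H.V → H'.V) (ψ : H.E → H'.E) :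
    ∀ {u w : H.V} (p : H.Walk u w), p.edges ≠ [] →
      (∀ e ∈ p.edges, H'.ends (ψ e) = Sym2.map f (H.ends e)) → (p.edges.map ψ).Nodup →
      ∃ (a b : H'.E) (Q : H'.lineGraph.Walk a b),
        f w ∈ H'.ends a ∧ f u ∈ H'.ends b ∧ Q.support = (p.edges.map ψ).reverse
  | _, _, .nil _, hne, _, _ => absurd rfl hne
  | u, w, .cons e h (.nil _), _, hends, _ => by
      have he : H'.ends (ψ e) = s(f u, f w) := by
        rw [hends e List.mem_cons_self, h, Sym2.map_mk]
      exact ⟨ψ e, ψ e, .nil _, he ▸ Sym2.mem_mk_right _ _, he ▸ Sym2.mem_mk_left _ _, rfl⟩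
  | u, _, .cons (v := u') e h (.cons e' h' p), _, hends, hnd => by
      have he : H'.ends (ψ e) = s(f u, f u') := by
        rw [hends e List.mem_cons_self, h, Sym2.map_mk]
      obtain ⟨a, b, Q, ha, hb, hQ⟩ := exists_lineGraph_walk f ψ (.cons e' h' p)
        (List.cons_ne_nil _ _) (fun e he => hends e (List.mem_cons_of_mem _ he))
        (List.nodup_cons.1 hnd).2
      have hbe : b ≠ ψ e := by
        intro hbe
        have hb_mem : b ∈ ((Walk.cons e' h' p).edges.map ψ).reverse := hQ ▸ Q.end_mem_support
        exact (List.nodup_cons.1 hnd).1 (hbe ▸ List.mem_reverse.1 hb_mem)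
      obtain ⟨ℓ, hℓ⟩ := lineGraph_adj hbe hb (he ▸ Sym2.mem_mk_right _ _)
      refine ⟨a, ψ e, Q.concat ℓ hℓ, ha, he ▸ Sym2.mem_mk_left _ _, ?_⟩
      refine (Q.support_concat ℓ hℓ).trans ?_
      rw [hQ]
      exact (List.reverse_cons ..).symm

/-- `e₀` only provides the (irrelevant) value of `ψ` on the edges deleted by the consolidation. -/
theorem IsConsolidation.exists_edgeMap {X : Set G.V} {G' : Multigraph} {q : G.V → G'.V}
    {x : G'.V} (hcons : G.IsConsolidation X G' q x) {e₀ : G.E} (he₀ : ∃ w ∈ G.ends e₀, w ∉ X) :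
    ∃ ψ : G.E → G'.E,
      (∀ e, (∃ w ∈ G.ends e, w ∉ X) → G'.ends (ψ e) = Sym2.map q (G.ends e)) ∧
      Set.InjOn ψ {e | ∃ w ∈ G.ends e, w ∉ X} := by
  classical
  obtain ⟨-, -, -, -, φ, hφ⟩ := hcons
  refine ⟨fun e => if h : ∃ w ∈ G.ends e, w ∉ X then φ ⟨e, h⟩ else φ ⟨e₀, he₀⟩, ?_, ?_⟩
  · intro e he
    simp only [dif_pos he]
    exact hφ ⟨e, he⟩
  · intro e he f hf hef
    simp only [dif_pos (show ∃ w ∈ G.ends e, w ∉ X from he),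
      dif_pos (show ∃ w ∈ G.ends f, w ∉ X from hf)] at hef
    exact congrArg Subtype.val (φ.injective hef)

end Multigraph

open Multigraph in
/-- an `X`-spider of order `k` with body `v` yields `k` pairwise
vertex-disjoint paths in the line graph of the consolidation, from the clique `δ(x)`
to the edges incident to (the image of) `v`. -/
theorem spider_gives_disjoint_paths_in_lineGraph (G : Multigraph) (X : Set G.V) (k : ℕ)
    (v : G.V) (hspider : HasSpiderWithBody G X k v)
    (G' : Multigraph) (q : G.V → G'.V) (x : G'.V)
    (hcons : IsConsolidation G X G' q x) :
    ∃ (a b : Fin k → G'.E) (P : ∀ i, G'.lineGraph.Walk (a i) (b i)),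
      (∀ i, x ∈ G'.ends (a i)) ∧ (∀ i, q v ∈ G'.ends (b i)) ∧
      (∀ i, (P i).IsPath) ∧
      (∀ i j, i ≠ j → ∀ w ∈ (P i).support, w ∉ (P j).support) := by
  obtain ⟨hvX, tgt, P, htgt, hpath, hint, hdisj⟩ := hspider
  rcases isEmpty_or_nonempty (Fin k) with hk | ⟨⟨i₀⟩⟩
  · exact ⟨isEmptyElim, isEmptyElim, isEmptyElim, isEmptyElim, isEmptyElim, isEmptyElim,
      fun i => isEmptyElim i⟩
  have hne : ∀ i, (P i).edges ≠ [] :=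
    fun i => (P i).edges_ne_nil_of_ne fun h => hvX (h ▸ htgt i)
  have hsurvive : ∀ i, ∀ e ∈ (P i).edges, ∃ w ∈ G.ends e, w ∉ X := by
    intro i e he
    obtain ⟨z, hz, hzP⟩ := (P i).exists_mem_ends_mem_support_dropLast he
    rcases (P i).eq_or_mem_internals_of_mem_support_dropLast hzP with rfl | hzint
    exacts [⟨z, hz, hvX⟩, ⟨z, hz, hint i z hzint⟩]
  obtain ⟨e₀, he₀⟩ := List.exists_mem_of_ne_nil _ (hne i₀)
  obtain ⟨ψ, hψ, hψinj⟩ := hcons.exists_edgeMap (hsurvive i₀ e₀ he₀)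
  have hnodup : ∀ i, ((P i).edges.map ψ).Nodup := fun i =>
    (hpath i).edges_nodup.map_on fun e he f hf => hψinj (hsurvive i e he) (hsurvive i f hf)
  choose a b Q ha hb hQ using fun i =>
    (P i).exists_lineGraph_walk q ψ (hne i) (fun e he => hψ e (hsurvive i e he)) (hnodup i)
  refine ⟨a, b, Q, fun i => hcons.2.1 _ (htgt i) ▸ ha i, hb, fun i => ?_, ?_⟩
  · unfold Walk.IsPath
    rw [hQ i]
    exact List.nodup_reverse.2 (hnodup i)
  · intro i j hij w hwi hwj
    rw [hQ] at hwi hwj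
    obtain ⟨e, he, rfl⟩ := List.mem_map.1 (List.mem_reverse.1 hwi)
    obtain ⟨f, hf, hfe⟩ := List.mem_map.1 (List.mem_reverse.1 hwj)
    exact hdisj i j hij e he (hψinj (hsurvive i e he) (hsurvive j f hf) hfe.symm ▸ hf)
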